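/- Let X, Y be topological spaces, f : X → Y a continuous open surjection, and suppose modal formulas over the language with ∧, ¬, interior modality ⊡, and difference modality [≠] are evaluated via valuations ⟦·⟧_Y on Y and ⟦·⟧_X on X with ⟦p⟧_X = f⁻¹(⟦p⟧_Y) for all propositional variables p. Let Σ be a finite set of formulas closed under subformulas and single negations, and assume f⁻¹({y}) is a singleton for every y ∈ Y that is φ-unique for some φ ∈ Σ (i.e., ⟦φ⟧_Y = {y}). Then ⟦φ⟧_X = f⁻¹(⟦φ⟧_Y) for every φ ∈ Σ. -/
import Mathlib


/-- Modal formulas in the language with conjunction, negation, the interior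
modality `⊡` and the difference modality `[≠]`. -/
inductive Fml where
  | var : ℕ → Fml
  | neg : Fml → Fml
  | and : Fml → Fml → Fml
  | int : Fml → Fml
  | diff : Fml → Fml
deriving DecidableEq

/-- Topological semantics with interior and difference modalities. -/
def sem {X : Type*} [TopologicalSpace X] (v : ℕ → Set X) : Fml → Set X
  | .var n => v n
  | .neg φ => (sem v φ)ᶜ
  | .and φ ψ => sem v φ ∩ sem v ψ
  | .int φ => interior (sem v φ)
  | .diff φ => {x | sem v φ ∪ {x} = Set.univ}

theorem sigma_morphism_preservation {X Y : Type*} [TopologicalSpace X] [TopologicalSpace Y]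
    (f : X → Y) (hcont : Continuous f) (hopen : IsOpenMap f) (hsurj : Function.Surjective f)
    (v : ℕ → Set Y) (S : Set Fml) (hfin : S.Finite)
    (hneg : ∀ φ, Fml.neg φ ∈ S → φ ∈ S)
    (hand : ∀ φ ψ, Fml.and φ ψ ∈ S → φ ∈ S ∧ ψ ∈ S)
    (hint : ∀ φ, Fml.int φ ∈ S → φ ∈ S)
    (hdiff : ∀ φ, Fml.diff φ ∈ S → φ ∈ S)
    (hsneg : ∀ φ ∈ S, (∃ ψ, φ = Fml.neg ψ) ∨ Fml.neg φ ∈ S)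
    (hinj : ∀ φ ∈ S, ∀ y : Y, sem v φ = {y} → ∃ x : X, f ⁻¹' {y} = {x}) :
    ∀ φ ∈ S, sem (fun n => f ⁻¹' v n) φ = f ⁻¹' sem v φ := by

  intro φ
  induction φ with
  | var n => intro _; rfl
  | neg φ ih =>
    intro h
    simp only [sem, ih (hneg φ h), Set.preimage_compl]
  | and φ ψ ihφ ihψ =>
    intro h
    obtain ⟨h1, h2⟩ := hand φ ψ h
    simp only [sem, ihφ h1, ihψ h2, Set.preimage_inter]
  | int φ ih =>
    intro h
    simp only [sem, ih (hint φ h),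
      (hopen.preimage_interior_eq_interior_preimage hcont (sem v φ)).symm]
  | diff φ ih =>
    intro h
    have hφS := hdiff φ h
    have hA := ih hφS
    ext x
    simp only [sem, Set.mem_setOf_eq, Set.mem_preimage, hA]
    constructor
    · intro hx
      ext y
      simp only [Set.mem_univ, iff_true]
      rcases hsurj y with ⟨x', rfl⟩
      have hx' : x' ∈ f ⁻¹' sem v φ ∪ {x} := hx ▸ Set.mem_univ x'
      rcases hx' with h1 | h1
      · exact Or.inl h1
      · exact Or.inr (by simp only [Set.mem_singleton_iff] at h1 ⊢; rw [h1])
    · intro hy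
      ext x'
      simp only [Set.mem_univ, iff_true]
      by_cases hmem : f x' ∈ sem v φ
      · exact Or.inl hmem
      · right
        have hfx' : f x' = f x := by
          have : f x' ∈ sem v φ ∪ {f x} := hy ▸ Set.mem_univ (f x')
          rcases this with h1 | h1
          · exact absurd h1 hmem
          · exact h1
        have hfxA : f x ∉ sem v φ := hfx' ▸ hmem
        have hcompl : (sem v φ)ᶜ = {f x} := by
          apply Set.eq_singleton_iff_unique_mem.mpr
          refine ⟨hfxA, fun z hz => ?_⟩
          have : z ∈ sem v φ ∪ {f x} := hy ▸ Set.mem_univ z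
          rcases this with h1 | h1
          · exact absurd h1 hz
          · exact h1
        have hsingle : ∃ x0 : X, f ⁻¹' {f x} = {x0} := by
          rcases hsneg φ hφS with ⟨ψ, rfl⟩ | hnφ
          · have hψ : ψ ∈ S := hneg ψ hφS
            apply hinj ψ hψ (f x)
            have : sem v (Fml.neg ψ) = (sem v ψ)ᶜ := rfl
            rw [this, compl_compl] at hcompl
            exact hcompl
          · exact hinj (Fml.neg φ) hnφ (f x) hcompl
        obtain ⟨x0, hx0⟩ := hsingle
        have h1 : x ∈ f ⁻¹' {f x} := rfl
        have h2 : x' ∈ f ⁻¹' {f x} := hfx'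
        rw [hx0] at h1 h2
        simp only [Set.mem_singleton_iff] at h1 h2 ⊢
        rw [h2, h1]
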